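/- Let K be an N×N real symmetric positive semidefinite matrix and let P be an S×N sampling matrix. Then for every ᾱ ∈ ℝ^N there exist α ∈ ℝ^S and β ∈ ℝ^N with P K β = 0 such that K ᾱ = K Pᵀ α + K β. -/

import Mathlib

/-!
Factor `K = Bᵀ B`. With `A = B Pᵀ` we get `P K Pᵀ = Aᵀ A` and `P K ā = Aᵀ (B ā)`; since `Aᵀ A` and `Aᵀ`
have the same range (equal rank), some `α` solves `P K Pᵀ α = P K ā`. Then `β = ā - Pᵀ α` works.
-/

open Matrix
open scoped MatrixOrder

variable {m n R : Type*} [Fintype m] [Fintype n] [Field R] [LinearOrder R] [IsStrictOrderedRing R]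

theorem Matrix.range_mulVecLin_transpose_mul_self (A : Matrix m n R) :
    LinearMap.range (Aᵀ * A).mulVecLin = LinearMap.range Aᵀ.mulVecLin := by
  refine Submodule.eq_of_le_of_finrank_eq ?_ ?_
  · rintro x ⟨v, rfl⟩
    exact ⟨A *ᵥ v, by simp only [mulVecLin_apply, mulVec_mulVec]⟩
  · exact A.rank_transpose_mul_self.trans A.rank_transpose.symm

theorem Matrix.exists_transpose_mul_self_mulVec_eq (A : Matrix m n R) (v : m → R) :
    ∃ x, (Aᵀ * A) *ᵥ x = Aᵀ *ᵥ v := by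
  have hv : Aᵀ *ᵥ v ∈ LinearMap.range (Aᵀ * A).mulVecLin := by
    rw [range_mulVecLin_transpose_mul_self]
    exact ⟨v, rfl⟩
  exact hv

theorem Matrix.PosSemidef.exists_eq_transpose_mul_self {K : Matrix n n ℝ} (hK : K.PosSemidef) :
    ∃ B : Matrix n n ℝ, K = Bᵀ * B := by
  classical
  obtain ⟨B, rfl⟩ := CStarAlgebra.nonneg_iff_eq_star_mul_self.mp hK.nonneg
  exact ⟨B, by rw [star_eq_conjTranspose, conjTranspose_eq_transpose_of_trivial]⟩

theorem Matrix.PosSemidef.exists_mul_mul_transpose_mulVec_eq {K : Matrix n n ℝ} (hK : K.PosSemidef)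
    (P : Matrix m n ℝ) (a : n → ℝ) : ∃ α, (P * K * Pᵀ) *ᵥ α = P *ᵥ (K *ᵥ a) := by
  obtain ⟨B, rfl⟩ := hK.exists_eq_transpose_mul_self
  obtain ⟨α, hα⟩ := (B * Pᵀ).exists_transpose_mul_self_mulVec_eq (B *ᵥ a)
  refine ⟨α, ?_⟩
  simpa only [transpose_mul, transpose_transpose, mulVec_mulVec, Matrix.mul_assoc] using hα

theorem stmt_4_general (N S : ℕ) (K : Matrix (Fin N) (Fin N) ℝ) (hK : K.PosSemidef)
    (P : Matrix (Fin S) (Fin N) ℝ) :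
    ∀ abar : Fin N → ℝ, ∃ (α : Fin S → ℝ) (β : Fin N → ℝ),
      P *ᵥ (K *ᵥ β) = 0 ∧ K *ᵥ abar = K *ᵥ (Pᵀ *ᵥ α) + K *ᵥ β := by
  intro abar
  obtain ⟨α, hα⟩ := hK.exists_mul_mul_transpose_mulVec_eq P abar
  refine ⟨α, abar - Pᵀ *ᵥ α, ?_, by rw [mulVec_sub]; abel⟩
  rw [mulVec_sub, mulVec_sub, ← hα]
  simp only [mulVec_mulVec, Matrix.mul_assoc, sub_self]

/-- Decomposition of any RKHS graph signal K ᾱ into a part expanded over the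
sampled vertices and a part vanishing on the sampling set. -/
theorem stmt_4 (N S : ℕ) (K : Matrix (Fin N) (Fin N) ℝ) (hK : K.PosSemidef)
    (idx : Fin S → Fin N) (hidx : StrictMono idx)
    (P : Matrix (Fin S) (Fin N) ℝ)
    (hP : ∀ s n, P s n = if n = idx s then 1 else 0) :
    ∀ abar : Fin N → ℝ, ∃ (α : Fin S → ℝ) (β : Fin N → ℝ),
      P *ᵥ (K *ᵥ β) = 0 ∧ K *ᵥ abar = K *ᵥ (Pᵀ *ᵥ α) + K *ᵥ β :=
  stmt_4_general N S K hK P
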